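/- arXiv:2111.10624 — 5 statements merged into one kernel-verified Lean document; each statement's English description precedes it below -/
import Mathlib

section
/- Let A and B be n×n matrices over a field F. Then for every positive integer k, rank((A+B)^k) ≤ k·rank(B) + rank(A^k). -/
/-!
Generalize to `rank ((A + B) ^ k * C) ≤ k * rank B + rank (A ^ k * C)` for an arbitrary `C` and
induct on `k`: from `(A + B) ^ (k + 1) * C = (A + B) ^ k * (A * C) + (A + B) ^ k * (B * C)`, the
second summand has rank at most `rank B`, and the first is the case `k` applied to `A * C`.
-/

namespace Matrix

variable {K : Type*} [Field K]

theorem rank_add_le {m n : Type*} [Fintype n] (A B : Matrix m n K) :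
    (A + B).rank ≤ A.rank + B.rank := by
  have hrange : LinearMap.range (A + B).mulVecLin ≤
      LinearMap.range A.mulVecLin ⊔ LinearMap.range B.mulVecLin := by
    rintro _ ⟨v, rfl⟩
    rw [mulVecLin_add]
    exact Submodule.add_mem_sup ⟨v, rfl⟩ ⟨v, rfl⟩
  exact (Submodule.finrank_mono hrange).trans (Submodule.finrank_add_le_finrank_add_finrank _ _)

theorem rank_add_pow_mul_le {n o : Type*} [Fintype n] [DecidableEq n] [Fintype o]
    (A B : Matrix n n K) (k : ℕ) (C : Matrix n o K) :
    ((A + B) ^ k * C).rank ≤ k * B.rank + (A ^ k * C).rank := by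
  induction k generalizing C with
  | zero => simp
  | succ k ih =>
    have hexpand : (A + B) ^ (k + 1) * C = (A + B) ^ k * (A * C) + (A + B) ^ k * (B * C) := by
      rw [pow_succ, Matrix.mul_assoc, Matrix.add_mul, Matrix.mul_add]
    calc ((A + B) ^ (k + 1) * C).rank
        ≤ ((A + B) ^ k * (A * C)).rank + ((A + B) ^ k * (B * C)).rank :=
          hexpand ▸ rank_add_le _ _
      _ ≤ (k * B.rank + (A ^ k * (A * C)).rank) + B.rank :=
          add_le_add (ih (A * C)) ((rank_mul_le_right _ _).trans (rank_mul_le_left _ _))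
      _ = (k + 1) * B.rank + (A ^ (k + 1) * C).rank := by
          rw [pow_succ, Matrix.mul_assoc]
          ring

end Matrix

theorem stmt_1_general (F : Type*) [Field F] (n : ℕ) (A B : Matrix (Fin n) (Fin n) F)
    (k : ℕ) :
    ((A + B) ^ k).rank ≤ k * B.rank + (A ^ k).rank := by
  simpa using Matrix.rank_add_pow_mul_le A B k (1 : Matrix (Fin n) (Fin n) F)

theorem stmt_1 (F : Type*) [Field F] (n : ℕ) (A B : Matrix (Fin n) (Fin n) F)
    (k : ℕ) (hk : 0 < k) :
    ((A + B) ^ k).rank ≤ k * B.rank + (A ^ k).rank :=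
  stmt_1_general F n A B k
end

section
/- Let A be an n×n matrix over a field, B an n×n matrix of rank at most 1, and λ a scalar. Then rank((A + B − λI)^{j}) ≤ j + n − alg_λ(A), where j = j_λ(A) is the size of the largest Jordan block of A with eigenvalue λ and alg_λ(A) is the algebraic multiplicity of λ in A. -/
open Polynomial Matrix Module

lemma charpoly_shift {F : Type*} [Field F] {n : ℕ} (A : Matrix (Fin n) (Fin n) F) (lam : F) :
    (A - lam • (1 : Matrix (Fin n) (Fin n) F)).charpoly = A.charpoly.comp (X + C lam) := by
  have h : charmatrix (A - lam • (1 : Matrix (Fin n) (Fin n) F)) =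
      (charmatrix A).map (aeval (X + C lam)).toRingHom := by
    ext i j
    by_cases h : i = j
    · subst h; simp [charmatrix_apply_eq, Matrix.smul_apply, one_apply]; ring
    · simp [charmatrix_apply_ne _ _ _ h, Matrix.smul_apply, one_apply, h]
  rw [Matrix.charpoly, h, ← RingHom.mapMatrix_apply, ← RingHom.map_det]
  rw [Polynomial.comp_eq_aeval]
  rfl

lemma rank_pow_n {F : Type*} [Field F] {n : ℕ} (A : Matrix (Fin n) (Fin n) F) (lam : F) :
    ((A - lam • (1 : Matrix (Fin n) (Fin n) F)) ^ n).rank =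
      n - A.charpoly.rootMultiplicity lam := by
  set M := A - lam • (1 : Matrix (Fin n) (Fin n) F) with hM
  let φ : Module.End F (Fin n → F) := Matrix.toLinAlgEquiv' M
  have hpow : (M ^ n).mulVecLin = φ ^ n := by
    rw [show φ ^ n = Matrix.toLinAlgEquiv' (M ^ n) from (map_pow _ _ _).symm]
    rfl
  have hker : LinearMap.ker (φ ^ n) = Module.End.maxGenEigenspace φ 0 := by
    rw [Module.End.maxGenEigenspace_eq_genEigenspace_finrank,
      show finrank F (Fin n → F) = n from Module.finrank_fin_fun F,
      Module.End.genEigenspace_nat]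
    simp
  have hcp : φ.charpoly = M.charpoly := by
    rw [← LinearMap.charpoly_toMatrix φ (Pi.basisFun F (Fin n))]
    congr 1
    rw [LinearMap.toMatrix_eq_toMatrix']
    exact LinearMap.toMatrix'_toLin' M
  have hfk : finrank F (LinearMap.ker (φ ^ n)) = A.charpoly.rootMultiplicity lam := by
    rw [hker, LinearMap.finrank_maxGenEigenspace_zero_eq, hcp, hM, charpoly_shift,
      ← Polynomial.rootMultiplicity_eq_natTrailingDegree]
  have hrk : ((M ^ n).rank) = finrank F (LinearMap.range (φ ^ n)) := by
    rw [Matrix.rank, hpow]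
  have := LinearMap.finrank_range_add_finrank_ker (φ ^ n)
  rw [show finrank F (Fin n → F) = n from Module.finrank_fin_fun F] at this
  omega


lemma matrix_rank_add_le {F : Type*} [Field F] {n : ℕ} (X Y : Matrix (Fin n) (Fin n) F) :
    (X + Y).rank ≤ X.rank + Y.rank := by
  have h : LinearMap.range (X + Y).mulVecLin ≤
      LinearMap.range X.mulVecLin ⊔ LinearMap.range Y.mulVecLin := by
    rintro x ⟨v, rfl⟩
    rw [Matrix.mulVecLin_add]
    exact Submodule.mem_sup.2 ⟨X.mulVecLin v, ⟨v, rfl⟩, Y.mulVecLin v, ⟨v, rfl⟩,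
      rfl⟩
  calc (X + Y).rank ≤ finrank F (LinearMap.range X.mulVecLin ⊔ LinearMap.range Y.mulVecLin :
        Submodule F (Fin n → F)) := Submodule.finrank_mono h
    _ ≤ X.rank + Y.rank := Submodule.finrank_add_le_finrank_add_finrank _ _

lemma rank_pow_sub_pow {F : Type*} [Field F] {n : ℕ} (M B : Matrix (Fin n) (Fin n) F)
    (hB : B.rank ≤ 1) : ∀ j : ℕ, ((M + B) ^ j - M ^ j).rank ≤ j := by
  intro j
  induction j with
  | zero => simp
  | succ j ih =>
    have key : (M + B) ^ (j + 1) - M ^ (j + 1) =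
        ((M + B) ^ j - M ^ j) * M + (M + B) ^ j * B := by
      rw [pow_succ, pow_succ]
      noncomm_ring
    rw [key]
    calc (((M + B) ^ j - M ^ j) * M + (M + B) ^ j * B).rank
        ≤ (((M + B) ^ j - M ^ j) * M).rank + ((M + B) ^ j * B).rank :=
          matrix_rank_add_le _ _
      _ ≤ j + 1 := by
          have h1 := Matrix.rank_mul_le_left ((M + B) ^ j - M ^ j) M
          have h2 := Matrix.rank_mul_le_right ((M + B) ^ j) B
          omega


/-- Algebraic multiplicity of `μ` as an eigenvalue of `A`. -/
noncomputable def algMult {F : Type*} [Field F] {n : ℕ}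
    (A : Matrix (Fin n) (Fin n) F) (μ : F) : ℕ :=
  A.charpoly.rootMultiplicity μ

/-- The size of the largest Jordan block of `A` with eigenvalue `μ`
(`0` if `μ` is not an eigenvalue): the least `k` for which the rank of
`(A - μ·I)^k` drops to `n - alg_μ(A)`. -/
noncomputable def jordanIdx {F : Type*} [Field F] {n : ℕ}
    (A : Matrix (Fin n) (Fin n) F) (μ : F) : ℕ :=
  sInf {k : ℕ | ((A - μ • (1 : Matrix (Fin n) (Fin n) F)) ^ k).rank = n - algMult A μ}



private lemma jordan_mem {F : Type*} [Field F] {n : ℕ} (A : Matrix (Fin n) (Fin n) F)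
    (lam : F) :
    ((A - lam • (1 : Matrix (Fin n) (Fin n) F)) ^ jordanIdx A lam).rank = n - algMult A lam := by
  have hne : {k : ℕ |
      ((A - lam • (1 : Matrix (Fin n) (Fin n) F)) ^ k).rank = n - algMult A lam}.Nonempty :=
    ⟨n, rank_pow_n A lam⟩
  exact Nat.sInf_mem hne

theorem stmt_5 (F : Type*) [Field F] [IsAlgClosed F] (n : ℕ)
    (A B : Matrix (Fin n) (Fin n) F) (hB : B.rank ≤ 1) (lam : F) :
    ((A + B - lam • (1 : Matrix (Fin n) (Fin n) F)) ^ jordanIdx A lam).rank ≤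
      jordanIdx A lam + (n - algMult A lam) := by

  set j := jordanIdx A lam with hj
  set M := A - lam • (1 : Matrix (Fin n) (Fin n) F) with hM
  have hAB : A + B - lam • (1 : Matrix (Fin n) (Fin n) F) = M + B := by
    rw [hM]; abel
  rw [hAB]
  have h1 : ((M + B) ^ j).rank ≤ (M ^ j).rank + j := by
    have : (M + B) ^ j = M ^ j + ((M + B) ^ j - M ^ j) := by abel
    calc ((M + B) ^ j).rank = (M ^ j + ((M + B) ^ j - M ^ j)).rank := by rw [← this]
      _ ≤ (M ^ j).rank + ((M + B) ^ j - M ^ j).rank := matrix_rank_add_le _ _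
      _ ≤ (M ^ j).rank + j := by
          have := rank_pow_sub_pow M B hB j
          omega
  have h2 : (M ^ j).rank = n - algMult A lam := jordan_mem A lam
  omega
end

section
/- Let A be an n×n matrix over an algebraically closed field F, B of rank at most 1, and q(t) = p_{A+B}(t) the characteristic polynomial of A+B. Then for every λ ∈ F, m_λ(q) ≥ alg_λ(A) − j_λ(A), where m_λ(q) is the multiplicity of (t−λ) as a root of q. -/
open Polynomial Matrix

section Aux

variable {F : Type*} [Field F] {n : ℕ}

lemma aux_charpoly_sub_smul_one (A : Matrix (Fin n) (Fin n) F) (μ : F) :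
    (A - μ • (1 : Matrix (Fin n) (Fin n) F)).charpoly = A.charpoly.comp (X + C μ) := by
  classical
  let φ : F[X] →+* F[X] := (aeval (X + C μ) : F[X] →ₐ[F] F[X]).toRingHom
  have hcomp : ∀ p : F[X], p.comp (X + C μ) = φ p := by
    intro p
    simp [φ, Polynomial.comp, aeval_def, Polynomial.algebraMap_eq]
  have hmat : (charmatrix A).map φ = charmatrix (A - μ • (1 : Matrix (Fin n) (Fin n) F)) := by
    refine Matrix.ext fun i j => ?_
    by_cases h : i = j
    · subst h
      simp only [Matrix.map_apply, charmatrix_apply, Matrix.diagonal_apply_eq,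
        Matrix.sub_apply, Matrix.smul_apply, Matrix.one_apply_eq, smul_eq_mul, mul_one,
        map_sub, φ, AlgHom.coe_toRingHom, AlgHom.toRingHom_eq_coe, RingHom.coe_coe,
        aeval_X, aeval_C, algebraMap_eq, C_sub]
      ring
    · simp only [Matrix.map_apply, charmatrix_apply, Matrix.diagonal_apply_ne _ h,
        Matrix.sub_apply, Matrix.smul_apply, Matrix.one_apply_ne h, smul_eq_mul, mul_zero,
        zero_sub, map_neg, φ, AlgHom.coe_toRingHom, AlgHom.toRingHom_eq_coe, RingHom.coe_coe,
        aeval_C, algebraMap_eq, sub_zero]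
  rw [Matrix.charpoly, Matrix.charpoly, ← hmat, ← RingHom.mapMatrix_apply, ← RingHom.map_det,
    hcomp]

lemma aux_mulVecLin_pow (M : Matrix (Fin n) (Fin n) F) (k : ℕ) :
    (M ^ k).mulVecLin = M.mulVecLin ^ k := by
  induction k with
  | zero => simp [Matrix.mulVecLin_one]; rfl
  | succ k ih => rw [pow_succ, pow_succ, Matrix.mulVecLin_mul, ih]; rfl

lemma aux_rank_pow_add_rootMultiplicity (A : Matrix (Fin n) (Fin n) F) (μ : F) :
    ((A - μ • (1 : Matrix (Fin n) (Fin n) F)) ^ n).rank + A.charpoly.rootMultiplicity μ = n := by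
  classical
  set M := A - μ • (1 : Matrix (Fin n) (Fin n) F) with hM
  have h1 : A.charpoly.rootMultiplicity μ = M.charpoly.natTrailingDegree := by
    rw [rootMultiplicity_eq_natTrailingDegree, hM, aux_charpoly_sub_smul_one]
  let φ : Module.End F (Fin n → F) := M.mulVecLin
  have hchar : φ.charpoly = M.charpoly := by
    rw [← LinearMap.charpoly_toMatrix φ (Pi.basisFun F (Fin n)), LinearMap.toMatrix_eq_toMatrix',
      show φ = Matrix.toLin' M from (Matrix.toLin'_apply' M).symm, LinearMap.toMatrix'_toLin']
  have h2 : Module.finrank F (φ.maxGenEigenspace 0) = M.charpoly.natTrailingDegree := by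
    rw [← hchar]; exact LinearMap.finrank_maxGenEigenspace_zero_eq φ
  have h3 : φ.maxGenEigenspace 0 = LinearMap.ker (M ^ n).mulVecLin := by
    rw [Module.End.maxGenEigenspace_eq_genEigenspace_finrank, Module.finrank_fin_fun,
      Module.End.genEigenspace_nat, zero_smul, sub_zero, aux_mulVecLin_pow]
  have h4 := LinearMap.finrank_range_add_finrank_ker (M ^ n).mulVecLin
  rw [Module.finrank_fin_fun] at h4
  rw [h1, ← h2, h3, Matrix.rank]
  exact h4

lemma aux_rank_add_le (A B : Matrix (Fin n) (Fin n) F) : (A + B).rank ≤ A.rank + B.rank := by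
  classical
  have hle : LinearMap.range (A + B).mulVecLin ≤
      LinearMap.range A.mulVecLin ⊔ LinearMap.range B.mulVecLin := by
    rintro x ⟨y, rfl⟩
    rw [Matrix.mulVecLin_add, LinearMap.add_apply]
    exact Submodule.add_mem_sup ⟨y, rfl⟩ ⟨y, rfl⟩
  have h1 : (A + B).rank ≤
      Module.finrank F ↥(LinearMap.range A.mulVecLin ⊔ LinearMap.range B.mulVecLin) :=
    Submodule.finrank_mono hle
  have h2 := Submodule.finrank_sup_add_finrank_inf_eq
    (LinearMap.range A.mulVecLin) (LinearMap.range B.mulVecLin)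
  have hA : A.rank = Module.finrank F (LinearMap.range A.mulVecLin) := rfl
  have hB : B.rank = Module.finrank F (LinearMap.range B.mulVecLin) := rfl
  omega

lemma aux_rank_pow_sub_pow (M B : Matrix (Fin n) (Fin n) F) (k : ℕ) :
    ((M + B) ^ k - M ^ k).rank ≤ k * B.rank := by
  induction k with
  | zero => simp
  | succ k ih =>
    have key : (M + B) ^ (k + 1) - M ^ (k + 1)
        = (M + B) * ((M + B) ^ k - M ^ k) + B * M ^ k := by
      rw [mul_sub, ← pow_succ', add_mul, ← pow_succ']
      abel
    calc ((M + B) ^ (k + 1) - M ^ (k + 1)).rank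
        ≤ ((M + B) * ((M + B) ^ k - M ^ k)).rank + (B * M ^ k).rank := by
          rw [key]; exact aux_rank_add_le _ _
      _ ≤ ((M + B) ^ k - M ^ k).rank + B.rank :=
          add_le_add (Matrix.rank_mul_le_right _ _) (Matrix.rank_mul_le_left _ _)
      _ ≤ k * B.rank + B.rank := add_le_add_left ih _
      _ = (k + 1) * B.rank := by ring

end Aux

theorem stmt_7 (F : Type*) [Field F] [IsAlgClosed F] (n : ℕ)
    (A B : Matrix (Fin n) (Fin n) F) (hB : B.rank ≤ 1)
    (q : Polynomial F) (hq : q = (A + B).charpoly) (lam : F) :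
    q.rootMultiplicity lam ≥ algMult A lam - jordanIdx A lam := by
  classical
  have halg : algMult A lam = A.charpoly.rootMultiplicity lam := rfl
  have hA := aux_rank_pow_add_rootMultiplicity A lam
  have hSn : (((A - lam • (1 : Matrix (Fin n) (Fin n) F)) ^ n).rank) = n - algMult A lam := by
    omega
  have hne : {k : ℕ | ((A - lam • (1 : Matrix (Fin n) (Fin n) F)) ^ k).rank
      = n - algMult A lam}.Nonempty := ⟨n, hSn⟩
  have hj_mem : ((A - lam • (1 : Matrix (Fin n) (Fin n) F)) ^ jordanIdx A lam).rank
      = n - algMult A lam := Nat.sInf_mem hne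
  have hj_le : jordanIdx A lam ≤ n := Nat.sInf_le hSn
  have hC := aux_rank_pow_add_rootMultiplicity (A + B) lam
  rw [add_sub_right_comm] at hC
  set j := jordanIdx A lam with hj
  set M := A - lam • (1 : Matrix (Fin n) (Fin n) F) with hM
  have h1 : ((M + B) ^ n).rank ≤ ((M + B) ^ j).rank := by
    have hsplit : (M + B) ^ n = (M + B) ^ j * (M + B) ^ (n - j) := by
      rw [← pow_add, Nat.add_sub_cancel' hj_le]
    rw [hsplit]
    exact Matrix.rank_mul_le_left _ _
  have h2 : ((M + B) ^ j).rank ≤ (M ^ j).rank + j * B.rank := by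
    have hsplit : (M + B) ^ j = M ^ j + ((M + B) ^ j - M ^ j) := by abel
    calc ((M + B) ^ j).rank = (M ^ j + ((M + B) ^ j - M ^ j)).rank := by rw [← hsplit]
      _ ≤ (M ^ j).rank + ((M + B) ^ j - M ^ j).rank := aux_rank_add_le _ _
      _ ≤ (M ^ j).rank + j * B.rank := by
          exact add_le_add_right (aux_rank_pow_sub_pow M B j) _
  have hBr : j * B.rank ≤ j := by
    calc j * B.rank ≤ j * 1 := Nat.mul_le_mul_left _ hB
      _ = j := mul_one j
  rw [hq]
  omega
end

section
/- Let A = J_{λ,n} be a single n×n Jordan block with eigenvalue λ over a field F, and let q(t) be any monic polynomial of degree n over F. Then there exist vectors v, w ∈ F^n such that the characteristic polynomial of A + v·wᵀ equals q(t). In particular one may take v = e_n and w = ∑_{i=0}^{n-1} a_i e_{n-i}, where p_A(t) − q(t) = ∑_{i=0}^{n-1} a_i (t−λ)^{n-1-i}. -/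
/-!
With `d = X - C μ`, adding `∑ j, d ^ j • (column j)` to column 0 of the characteristic matrix of
`J + e_n wᵀ` telescopes: column 0 becomes `p • e_n` with `p = d ^ n - ∑ j, C (w j) * d ^ j`, and
the complementary minor is lower triangular with `-1` on the diagonal. Hence the characteristic
polynomial is `p`, and choosing `w j = a (n - 1 - j)` makes `p = p_A - (p_A - q) = q`.
-/

open Polynomial Matrix

/-- The `r × r` upper-triangular Jordan block with eigenvalue `μ`. -/
def jordanBlock {F : Type*} [Field F] (μ : F) (r : ℕ) : Matrix (Fin r) (Fin r) F :=
  Matrix.of fun i j => if i = j then μ else if (i : ℕ) + 1 = (j : ℕ) then 1 else 0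

theorem det_updateCol_zero_single_last {R : Type*} [CommRing R] {m : ℕ}
    (M : Matrix (Fin (m + 1)) (Fin (m + 1)) R) (p : R) :
    (M.updateCol 0 (Pi.single (Fin.last m) p)).det =
      (-1) ^ m * p * (M.submatrix Fin.castSucc Fin.succ).det := by
  rw [det_succ_column _ 0, Fintype.sum_eq_single (Fin.last m)]
  · simp [Fin.succAbove_last, Fin.succAbove_zero]
    congr 2
  · intro i hi
    simp [hi]

section JordanBlock

variable {F : Type*} [Field F] {m : ℕ} (μ : F) (w : Fin (m + 1) → F)

theorem charmatrix_jordanBlock_add_vecMulVec_apply (k i : Fin (m + 1)) :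
    charmatrix (jordanBlock μ (m + 1) + vecMulVec (Pi.single (Fin.last m) 1) w) k i =
      (if i = k then X - C μ else 0) - (if (i : ℕ) = k + 1 then 1 else 0) -
        if k = Fin.last m then C (w i) else 0 := by
  by_cases hki : i = k
  · subst hki
    rw [charmatrix_apply_eq]
    by_cases hk : i = Fin.last m <;> simp [jordanBlock, vecMulVec_apply, hk, sub_add_eq_sub_sub]
  · rw [charmatrix_apply_ne _ _ _ (Ne.symm hki)]
    have hi : (i : ℕ) ≠ m + 1 := i.isLt.ne
    by_cases hk : k = Fin.last m
    · subst hk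
      simp [jordanBlock, vecMulVec_apply, hki, Ne.symm hki, hi, hi.symm]
    · simp [jordanBlock, vecMulVec_apply, hk, hki, Ne.symm hki, eq_comm]

theorem sum_pow_smul_charmatrix_jordanBlock_add_vecMulVec (k : Fin (m + 1)) :
    ∑ i : Fin (m + 1), (X - C μ) ^ (i : ℕ) •
        charmatrix (jordanBlock μ (m + 1) + vecMulVec (Pi.single (Fin.last m) 1) w) k i =
      (Pi.single (Fin.last m) ((X - C μ) ^ (m + 1) - ∑ i, C (w i) * (X - C μ) ^ (i : ℕ)) :
        Fin (m + 1) → F[X]) k := by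
  simp only [charmatrix_jordanBlock_add_vecMulVec_apply, smul_eq_mul]
  generalize X - C μ = d
  simp only [mul_sub, Finset.sum_sub_distrib, mul_ite, mul_zero, mul_one, Finset.sum_ite_eq',
    Finset.mem_univ, if_true]
  rw [Fin.sum_univ_eq_sum_range (fun i => if i = k + 1 then d ^ i else 0), Finset.sum_ite_eq']
  rcases eq_or_ne k (Fin.last m) with rfl | hk
  · simp [pow_succ, mul_comm]
  · simp [hk, Fin.val_lt_last hk, pow_succ]

theorem det_charmatrix_jordanBlock_add_vecMulVec_submatrix :
    ((charmatrix (jordanBlock μ (m + 1) + vecMulVec (Pi.single (Fin.last m) 1) w)).submatrix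
      Fin.castSucc Fin.succ).det = (-1) ^ m := by
  have hlast : ∀ k : Fin m, k.castSucc ≠ Fin.last m := fun k => (Fin.castSucc_lt_last k).ne
  have hsucc : ∀ k : Fin m, k.succ ≠ k.castSucc := fun k => Fin.castSucc_lt_succ.ne'
  rw [det_of_isLowerTriangular]
  · simp [charmatrix_jordanBlock_add_vecMulVec_apply, hlast, hsucc]
  · intro k i hki
    have hlt : (k : ℕ) < i := hki
    have h1 : i.succ ≠ k.castSucc := by rw [Ne, Fin.ext_iff]; simp; omega
    simp [charmatrix_jordanBlock_add_vecMulVec_apply, hlast, h1, hlt.ne']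

theorem charpoly_jordanBlock_add_vecMulVec :
    (jordanBlock μ (m + 1) + vecMulVec (Pi.single (Fin.last m) 1) w).charpoly =
      (X - C μ) ^ (m + 1) - ∑ i : Fin (m + 1), C (w i) * (X - C μ) ^ (i : ℕ) := by
  have hcol := det_updateCol_sum
    (charmatrix (jordanBlock μ (m + 1) + vecMulVec (Pi.single (Fin.last m) 1) w)) 0
    (fun i => (X - C μ) ^ (i : ℕ))
  rw [Fin.val_zero, pow_zero, one_smul] at hcol
  simp_rw [sum_pow_smul_charmatrix_jordanBlock_add_vecMulVec] at hcol
  rw [charpoly, ← hcol, det_updateCol_zero_single_last,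
    det_charmatrix_jordanBlock_add_vecMulVec_submatrix, mul_right_comm, ← mul_pow]
  simp

theorem charpoly_jordanBlock : (jordanBlock μ (m + 1)).charpoly = (X - C μ) ^ (m + 1) := by
  simpa using charpoly_jordanBlock_add_vecMulVec μ (0 : Fin (m + 1) → F)

end JordanBlock

theorem stmt_8_general (F : Type*) [Field F] (n : ℕ) (hn : 0 < n) (lam : F)
    (A : Matrix (Fin n) (Fin n) F) (hA : A = jordanBlock lam n)
    (q : Polynomial F)
    (a : ℕ → F)
    (ha : A.charpoly - q =
      ∑ i ∈ Finset.range n, Polynomial.C (a i) * (Polynomial.X - Polynomial.C lam) ^ (n - 1 - i))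
    (v w : Fin n → F)
    (hv : v = fun j : Fin n => if (j : ℕ) = n - 1 then (1 : F) else 0)
    (hw : w = fun j : Fin n => a (n - 1 - (j : ℕ))) :
    (A + vecMulVec v w).charpoly = q ∧
      ∃ v' w' : Fin n → F, (A + vecMulVec v' w').charpoly = q := by
  obtain ⟨m, rfl⟩ : ∃ m, n = m + 1 := ⟨n - 1, by omega⟩
  subst hA
  have hv : v = Pi.single (Fin.last m) 1 := by
    rw [hv]
    ext j
    simp [Pi.single_apply, Fin.ext_iff]
  have hreflect : ∑ j : Fin (m + 1), C (w j) * (X - C lam) ^ (j : ℕ) =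
      ∑ i ∈ Finset.range (m + 1), C (a i) * (X - C lam) ^ (m + 1 - 1 - i) := by
    rw [hw, Fin.sum_univ_eq_sum_range (fun j => C (a (m + 1 - 1 - j)) * (X - C lam) ^ j),
      ← Finset.sum_range_reflect]
    refine Finset.sum_congr rfl fun i hi => ?_
    rw [Finset.mem_range] at hi
    rw [show m + 1 - 1 - (m + 1 - 1 - i) = i by omega]
  have hcharpoly : (jordanBlock lam (m + 1) + vecMulVec v w).charpoly = q := by
    rw [hv, charpoly_jordanBlock_add_vecMulVec, hreflect, ← ha, charpoly_jordanBlock,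
      sub_sub_cancel]
  exact ⟨hcharpoly, v, w, hcharpoly⟩

theorem stmt_8 (F : Type*) [Field F] (n : ℕ) (hn : 0 < n) (lam : F)
    (A : Matrix (Fin n) (Fin n) F) (hA : A = jordanBlock lam n)
    (q : Polynomial F) (hq : q.Monic) (hdeg : q.natDegree = n)
    (a : ℕ → F)
    (ha : A.charpoly - q =
      ∑ i ∈ Finset.range n, Polynomial.C (a i) * (Polynomial.X - Polynomial.C lam) ^ (n - 1 - i))
    (v w : Fin n → F)
    (hv : v = fun j : Fin n => if (j : ℕ) = n - 1 then (1 : F) else 0)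
    (hw : w = fun j : Fin n => a (n - 1 - (j : ℕ))) :
    (A + vecMulVec v w).charpoly = q ∧
      ∃ v' w' : Fin n → F, (A + vecMulVec v' w').charpoly = q :=
  stmt_8_general F n hn lam A hA q a ha v w hv hw
end

section
/- Let A be an n×n matrix over a field F and B = v·wᵀ with v, w ∈ F^n. Then for any monic polynomial q of degree n, p_{A+B}(t) = q(t) if and only if wᵀ(tI−A)^{-1}v = (p_A(t) − q(t))/p_A(t) as rational functions in t. -/
set_option synthInstance.maxHeartbeats 400000

open Polynomial Matrix

theorem stmt_14 (F : Type*) [Field F] (n : ℕ) (A : Matrix (Fin n) (Fin n) F)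
    (v w : Fin n → F) (q : Polynomial F) (hq : q.Monic) (hdeg : q.natDegree = n) :
    (A + vecMulVec v w).charpoly = q ↔
      (algebraMap F (RatFunc F) ∘ w) ⬝ᵥ
          (((RatFunc.X : RatFunc F) • (1 : Matrix (Fin n) (Fin n) (RatFunc F)) -
              A.map (algebraMap F (RatFunc F)))⁻¹ *ᵥ
            (algebraMap F (RatFunc F) ∘ v)) =
        algebraMap F[X] (RatFunc F) (A.charpoly - q) /
          algebraMap F[X] (RatFunc F) A.charpoly := by
  set φ : F[X] →+* RatFunc F := (algebraMap F[X] (RatFunc F) : F[X] →+* RatFunc F) with hφ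
  set ψ := algebraMap F (RatFunc F)
  have hmap : ∀ B : Matrix (Fin n) (Fin n) F,
      (charmatrix B).map φ =
        (RatFunc.X : RatFunc F) • (1 : Matrix (Fin n) (Fin n) (RatFunc F)) - B.map ψ := by
    intro B
    ext i j
    by_cases h : i = j
    · subst h
      simp [charmatrix_apply_eq, hφ, RatFunc.algebraMap_X, Matrix.one_apply, ψ,
        ← RatFunc.algebraMap_C]
    · simp [charmatrix_apply_ne _ _ _ h, hφ, Matrix.one_apply, h, ψ, ← RatFunc.algebraMap_C]
  set M : Matrix (Fin n) (Fin n) (RatFunc F) :=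
    (RatFunc.X : RatFunc F) • (1 : Matrix (Fin n) (Fin n) (RatFunc F)) - A.map ψ with hM
  have hdetA : φ A.charpoly = M.det := by
    rw [Matrix.charpoly, RingHom.map_det, RingHom.mapMatrix_apply, hmap A]
  have hchar0 : A.charpoly ≠ 0 := A.charpoly_monic.ne_zero
  have hφinj : Function.Injective φ := RatFunc.algebraMap_injective F
  have hAne : φ A.charpoly ≠ 0 := fun h => hchar0 (hφinj (by simpa using h))
  have hdet_ne : M.det ≠ 0 := hdetA ▸ hAne
  have hMunit : IsUnit M.det := Ne.isUnit hdet_ne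
  set v' := ψ ∘ v with hv'
  set w' := ψ ∘ w with hw'
  have hvm : (vecMulVec v w).map ψ = Matrix.replicateCol Unit v' * Matrix.replicateRow Unit w' := by
    ext i j
    simp [vecMulVec_apply, Matrix.mul_apply, hv', hw']
  have hkey : φ (A + vecMulVec v w).charpoly = M.det * (1 - w' ⬝ᵥ M⁻¹ *ᵥ v') := by
    rw [Matrix.charpoly, RingHom.map_det, RingHom.mapMatrix_apply, hmap, Matrix.map_add ψ (map_add ψ), hvm,
      sub_add_eq_sub_sub]
    have h2 : M - Matrix.replicateCol Unit v' * Matrix.replicateRow Unit w' =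
        M + Matrix.replicateCol Unit (-v') * Matrix.replicateRow Unit w' := by
      ext i j
      simp [Matrix.mul_apply, sub_eq_add_neg]
    rw [← hM, h2, Matrix.det_add_replicateCol_mul_replicateRow hMunit]
    congr 1
    rw [Matrix.det_unique]
    simp only [Matrix.add_apply, Matrix.one_apply_eq, Matrix.mul_apply, Matrix.replicateRow_apply,
      Matrix.replicateCol_apply, Pi.neg_apply, Matrix.mulVec, dotProduct, Finset.univ_unique,
      Finset.sum_mul, Finset.mul_sum]
    rw [Finset.sum_comm, sub_eq_add_neg, ← Finset.sum_neg_distrib]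
    congr 1
    refine Finset.sum_congr rfl fun i _ => ?_
    rw [← Finset.sum_neg_distrib]
    refine Finset.sum_congr rfl fun j _ => ?_
    ring
  generalize hxg : w' ⬝ᵥ M⁻¹ *ᵥ v' = x at hkey ⊢
  rw [← hdetA] at hkey
  rw [map_sub, eq_div_iff hAne]
  constructor
  · intro h
    rw [h] at hkey
    linear_combination hkey
  · intro h
    exact hφinj (by linear_combination hkey - h)
end
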